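/- Exponential decay of the error probability under XLRT. Suppose the true demand model is i = 1 and the pricing process follows the XLRT policy with thresholds η_0, η_1. Set a = (min over k ∈ Fin 3 of I(q 1 k ‖ q 0 k)) − η_1 > 0. Then for every t ≥ 1, P(L_t / t < η_1) ≤ exp(−2 a² t / (M − m)²). -/

import Mathlib

open MeasureTheory ProbabilityTheory Finset Real

noncomputable section

/-- Probability of outcome `y ∈ {0,1}` under a Bernoulli distribution with success
probability `p`:  `f p y = p^y (1-p)^(1-y)`. -/
def bern (p : ℝ) (y : ℕ) : ℝ := p ^ y * (1 - p) ^ (1 - y)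

/-- The Kullback–Leibler divergence between Bernoulli(α) and Bernoulli(β). -/
def klBern (α β : ℝ) : ℝ :=
  α * Real.log (α / β) + (1 - α) * Real.log ((1 - α) / (1 - β))

variable {Ω : Type*} {mΩ : MeasurableSpace Ω}

/-- The (unnormalized) log-likelihood statistic for the three-price (exploration) setting:
`L t = ∑_{j=1}^t log (f₁^{a_j}(y_j) / f₀^{a_j}(y_j))`, with `L 0 = 0`. -/
def LLR3 (q : Fin 2 → Fin 3 → ℝ) (a : ℕ → Ω → Fin 3) (y : ℕ → Ω → ℕ) (t : ℕ) (ω : Ω) : ℝ :=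
  ∑ j ∈ Finset.Icc 1 t,
    Real.log (bern (q 1 (a j ω)) (y j ω) / bern (q 0 (a j ω)) (y j ω))

/-- A pricing process with three available prices (arms `0`, `1` are the optimal prices of the
two demand models, arm `2` is the exploration price) under true demand model `i`: actions
`a t` are `ℱ (t-1)`-measurable, outcomes `y t ∈ {0,1}` are `ℱ t`-measurable, and the
conditional probability of a successful sale at time `t` given the past is `q i (a t)` a.s. -/
structure IsPricingProcess3 (μ : Measure Ω) (ℱ : Filtration ℕ mΩ)
    (q : Fin 2 → Fin 3 → ℝ) (i : Fin 2) (a : ℕ → Ω → Fin 3) (y : ℕ → Ω → ℕ) : Prop where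
  meas_a : ∀ t, 1 ≤ t → Measurable[ℱ (t - 1)] (a t)
  meas_y : ∀ t, 1 ≤ t → Measurable[ℱ t] (y t)
  y_range : ∀ t, 1 ≤ t → ∀ ω, y t ω = 0 ∨ y t ω = 1
  sale_prob : ∀ t, 1 ≤ t →
    μ[Set.indicator {ω | y t ω = 1} (fun _ => (1 : ℝ)) | ℱ (t - 1)]
      =ᵐ[μ] fun ω => q i (a t ω)

/-- The XLRT policy with thresholds `η₀, η₁`: for `t ≥ 1`, `a (t+1) = 0` if `L t < -η₀`,
`a (t+1) = 2` (the exploration price) if `-η₀ ≤ L t ≤ η₁`, and `a (t+1) = 1` if `L t > η₁`. -/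
def IsXLRT (q : Fin 2 → Fin 3 → ℝ) (a : ℕ → Ω → Fin 3) (y : ℕ → Ω → ℕ) (η₀ η₁ : ℝ) : Prop :=
  ∀ t, 1 ≤ t → ∀ ω,
    a (t + 1) ω =
      if LLR3 q a y t ω < -η₀ then 0 else if LLR3 q a y t ω ≤ η₁ then 2 else 1

/-! Given the past, the increment `log (f₁/f₀)` of `L` at time `t` takes the two values
`llrBern q aₜ 1`, `llrBern q aₜ 0`, both in `[m, M]`, with probabilities `q 1 aₜ`, `1 - q 1 aₜ`,
so its conditional mean is `I(q 1 aₜ ‖ q 0 aₜ) ≥ a + η₁`. Hoeffding's lemma for this two-point law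
bounds its conditional moment-generating function at `-λ` by `exp (λ²(M - m)²/8 - λ(a + η₁))`;
multiplying these bounds along the filtration and applying the Chernoff bound with the optimal
`λ = 4a / (M - m)²` gives the claim (Azuma–Hoeffding). -/

@[simp] lemma bern_one (p : ℝ) : bern p 1 = p := by simp [bern]

@[simp] lemma bern_zero (p : ℝ) : bern p 0 = 1 - p := by simp [bern]

def llrBern (q : Fin 2 → Fin 3 → ℝ) (k : Fin 3) (y : ℕ) : ℝ :=
  Real.log (bern (q 1 k) y / bern (q 0 k) y)

lemma klBern_eq_llrBern (q : Fin 2 → Fin 3 → ℝ) (k : Fin 3) :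
    klBern (q 1 k) (q 0 k) = q 1 k * llrBern q k 1 + (1 - q 1 k) * llrBern q k 0 := by
  simp [klBern, llrBern]

lemma exists_abs_llrBern_le (q : Fin 2 → Fin 3 → ℝ) :
    ∃ B, ∀ k (b : Fin 2), |llrBern q k b| ≤ B := by
  obtain ⟨B, hB⟩ := Finite.exists_le fun p : Fin 3 × Fin 2 => |llrBern q p.1 p.2|
  exact ⟨B, fun k b => hB (k, b)⟩

lemma two_point_mgf_le {p : ℝ} (hp0 : 0 ≤ p) (hp1 : p ≤ 1) (s t : ℝ) :
    p * exp s + (1 - p) * exp t ≤ exp (p * s + (1 - p) * t + (s - t) ^ 2 / 8) := by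
  let ν : Measure Bool := ENNReal.ofReal p • Measure.dirac true +
    ENNReal.ofReal (1 - p) • Measure.dirac false
  have : IsProbabilityMeasure ν := ⟨by
    simp [ν, ← ENNReal.ofReal_add hp0 (sub_nonneg.2 hp1)]⟩
  have hν : ∀ g : Bool → ℝ, ∫ b, g b ∂ν = p * g true + (1 - p) * g false := by
    intro g
    rw [integral_fintype .of_finite]
    simp [ν, measureReal_def, hp0, sub_nonneg.2 hp1]
  let X : Bool → ℝ := fun b => cond b s t
  have hX : ∀ᵐ b ∂ν, X b ∈ Set.Icc (min s t) (max s t) :=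
    Filter.Eventually.of_forall fun b => by cases b <;> simp [X]
  have h := (hasSubgaussianMGF_of_mem_Icc Measurable.of_discrete.aemeasurable hX).mgf_le 1
  simp only [mgf, hν, X, max_sub_min_eq_abs, one_mul, cond_true, cond_false] at h
  set e := p * s + (1 - p) * t
  have hc : ((‖|t - s|‖₊ / 2) ^ 2 : NNReal) * (1 : ℝ) ^ 2 / 2 = (s - t) ^ 2 / 8 := by
    push_cast
    rw [Real.norm_eq_abs, abs_abs, div_pow, sq_abs]
    ring
  calc p * exp s + (1 - p) * exp t = (p * exp (s - e) + (1 - p) * exp (t - e)) * exp e := by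
        simp only [add_mul, mul_assoc, ← exp_add, sub_add_cancel]
    _ ≤ exp ((s - t) ^ 2 / 8) * exp e := by rw [← hc]; gcongr
    _ = exp (e + (s - t) ^ 2 / 8) := by rw [← exp_add, add_comm]

lemma two_point_exp_neg_mul_le {p u v m M l κ : ℝ} (hp0 : 0 ≤ p) (hp1 : p ≤ 1)
    (hu : u ∈ Set.Icc m M) (hv : v ∈ Set.Icc m M) (hl : 0 ≤ l) (hκ : κ ≤ p * u + (1 - p) * v) :
    p * exp (-l * u) + (1 - p) * exp (-l * v) ≤ exp (l ^ 2 * (M - m) ^ 2 / 8 - l * κ) := by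
  refine (two_point_mgf_le hp0 hp1 _ _).trans (exp_le_exp.2 ?_)
  have huv : (u - v) ^ 2 ≤ (M - m) ^ 2 :=
    sq_le_sq' (by linarith [hu.1, hv.2]) (by linarith [hu.2, hv.1])
  nlinarith [mul_le_mul_of_nonneg_left huv (sq_nonneg l), mul_le_mul_of_nonneg_left hκ hl]

lemma exp_mul_le_exp_abs_mul {s x C : ℝ} (hx : |x| ≤ C) : exp (s * x) ≤ exp (|s| * C) :=
  exp_le_exp.2 <| (le_abs_self _).trans <| by
    rw [abs_mul]; exact mul_le_mul_of_nonneg_left hx (abs_nonneg s)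

lemma integral_piecewise_eq_of_condExp_indicator {μ : Measure Ω} [IsFiniteMeasure μ]
    {F : MeasurableSpace Ω} (hF : F ≤ mΩ) {A : Set Ω} [DecidablePred (· ∈ A)]
    (hA : MeasurableSet[mΩ] A) {r : Ω → ℝ}
    (hr : μ[A.indicator (fun _ => (1 : ℝ)) | F] =ᵐ[μ] r) {H₁ H₀ : Ω → ℝ}
    (hH₁ : StronglyMeasurable[F] H₁) (hH₀ : StronglyMeasurable[F] H₀) {C : ℝ}
    (hH₁C : ∀ ω, |H₁ ω| ≤ C) (hH₀C : ∀ ω, |H₀ ω| ≤ C) :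
    ∫ ω, A.piecewise H₁ H₀ ω ∂μ = ∫ ω, (r ω * H₁ ω + (1 - r ω) * H₀ ω) ∂μ := by
  set indA := A.indicator (fun _ => (1 : ℝ))
  have hdiff : StronglyMeasurable[F] (H₁ - H₀) := hH₁.sub hH₀
  have hdiffC : ∀ᵐ ω ∂μ, ‖(H₁ - H₀) ω‖ ≤ C + C := Filter.Eventually.of_forall fun ω =>
    (abs_sub _ _).trans (add_le_add (hH₁C ω) (hH₀C ω))
  have hind : Integrable indA μ := (integrable_const 1).indicator hA
  have hH₀int : Integrable H₀ μ :=
    .of_bound (hH₀.mono hF).aestronglyMeasurable C (.of_forall hH₀C)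
  have hpull : ∫ ω, (H₁ - H₀) ω * indA ω ∂μ = ∫ ω, (H₁ - H₀) ω * r ω ∂μ := by
    rw [← integral_condExp hF]
    refine integral_congr_ae ((condExp_stronglyMeasurable_mul_of_bound hF hdiff hind _
      hdiffC).trans ?_)
    filter_upwards [hr] with ω hω
    simp [hω]
  have hsplit : A.piecewise H₁ H₀ = fun ω => (H₁ - H₀) ω * indA ω + H₀ ω := by
    ext ω
    by_cases hω : ω ∈ A <;> simp [indA, hω]
  calc ∫ ω, A.piecewise H₁ H₀ ω ∂μ
      = ∫ ω, (H₁ - H₀) ω * indA ω ∂μ + ∫ ω, H₀ ω ∂μ := by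
        rw [hsplit, integral_add (hind.bdd_mul (hdiff.mono hF).aestronglyMeasurable hdiffC)
          hH₀int]
    _ = ∫ ω, (H₁ - H₀) ω * r ω ∂μ + ∫ ω, H₀ ω ∂μ := by rw [hpull]
    _ = ∫ ω, (r ω * H₁ ω + (1 - r ω) * H₀ ω) ∂μ := by
        rw [← integral_add ((integrable_condExp.congr hr).bdd_mul
          (hdiff.mono hF).aestronglyMeasurable hdiffC) hH₀int]
        congr 1 with ω
        simp only [Pi.sub_apply]
        ring

namespace IsPricingProcess3

variable {μ : Measure Ω} {ℱ : Filtration ℕ mΩ} {q : Fin 2 → Fin 3 → ℝ}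
  {i : Fin 2} {a : ℕ → Ω → Fin 3} {y : ℕ → Ω → ℕ}

lemma measurable_llrBern (h : IsPricingProcess3 μ ℱ q i a y) {j t : ℕ} (hj : 1 ≤ j)
    (hjt : j ≤ t) : Measurable[ℱ t] fun ω => llrBern q (a j ω) (y j ω) :=
  (measurable_of_countable fun p : Fin 3 × ℕ => llrBern q p.1 p.2).comp
    (((h.meas_a j hj).mono (ℱ.mono (by omega)) le_rfl).prodMk
      ((h.meas_y j hj).mono (ℱ.mono hjt) le_rfl))

lemma measurable_LLR3 (h : IsPricingProcess3 μ ℱ q i a y) (t : ℕ) :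
    Measurable[ℱ t] (LLR3 q a y t) :=
  Finset.measurable_sum _ fun _ hj =>
    h.measurable_llrBern (Finset.mem_Icc.1 hj).1 (Finset.mem_Icc.1 hj).2

lemma abs_llrBern_le (h : IsPricingProcess3 μ ℱ q i a y) {B : ℝ}
    (hB : ∀ k (b : Fin 2), |llrBern q k b| ≤ B) {j : ℕ} (hj : 1 ≤ j) (k : Fin 3) (ω : Ω) :
    |llrBern q k (y j ω)| ≤ B := by
  rcases h.y_range j hj ω with hy | hy <;> rw [hy]
  exacts [hB k 0, hB k 1]

lemma abs_LLR3_le (h : IsPricingProcess3 μ ℱ q i a y) {B : ℝ}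
    (hB : ∀ k (b : Fin 2), |llrBern q k b| ≤ B) (t : ℕ) (ω : Ω) :
    |LLR3 q a y t ω| ≤ t * B :=
  calc |LLR3 q a y t ω| ≤ ∑ j ∈ Finset.Icc 1 t, |llrBern q (a j ω) (y j ω)| :=
        Finset.abs_sum_le_sum_abs _ _
    _ ≤ ∑ _j ∈ Finset.Icc 1 t, B :=
        Finset.sum_le_sum fun j hj => h.abs_llrBern_le hB (Finset.mem_Icc.1 hj).1 _ ω
    _ = t * B := by simp

lemma integrable_exp_mul_LLR3 [IsFiniteMeasure μ] (h : IsPricingProcess3 μ ℱ q i a y)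
    (s : ℝ) (t : ℕ) : Integrable (fun ω => exp (s * LLR3 q a y t ω)) μ := by
  obtain ⟨B, hB⟩ := exists_abs_llrBern_le q
  refine .of_bound ((measurable_exp.comp ((h.measurable_LLR3 t).const_mul s)).mono
    (ℱ.le t) le_rfl).aestronglyMeasurable (exp (|s| * (t * B))) (.of_forall fun ω => ?_)
  rw [norm_of_nonneg (exp_pos _).le]
  exact exp_mul_le_exp_abs_mul (h.abs_LLR3_le hB t ω)

lemma exp_mul_LLR3_succ_eq_piecewise (h : IsPricingProcess3 μ ℱ q i a y) (s : ℝ) (t : ℕ) :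
    (fun ω => exp (s * LLR3 q a y (t + 1) ω)) = {ω | y (t + 1) ω = 1}.piecewise
      (fun ω => exp (s * (LLR3 q a y t ω + llrBern q (a (t + 1) ω) 1)))
      (fun ω => exp (s * (LLR3 q a y t ω + llrBern q (a (t + 1) ω) 0))) := by
  ext ω
  rcases h.y_range (t + 1) (by omega) ω with hy | hy <;>
    simp [Set.piecewise, hy, LLR3, Finset.sum_Icc_succ_top, llrBern]

lemma mgf_LLR3_succ_le [IsFiniteMeasure μ] (h : IsPricingProcess3 μ ℱ q i a y) {s c : ℝ}
    (hc : ∀ k, q i k * exp (s * llrBern q k 1) + (1 - q i k) * exp (s * llrBern q k 0) ≤ c)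
    (t : ℕ) : mgf (LLR3 q a y (t + 1)) μ s ≤ c * mgf (LLR3 q a y t) μ s := by
  obtain ⟨B, hB⟩ := exists_abs_llrBern_le q
  have ht : 1 ≤ t + 1 := by omega
  have ha : Measurable[ℱ t] (a (t + 1)) := by simpa using h.meas_a (t + 1) ht
  have hr : μ[{ω | y (t + 1) ω = 1}.indicator (fun _ => (1 : ℝ)) | ℱ t]
      =ᵐ[μ] fun ω => q i (a (t + 1) ω) := by simpa using h.sale_prob (t + 1) ht
  let H (b : ℕ) (ω : Ω) : ℝ := exp (s * (LLR3 q a y t ω + llrBern q (a (t + 1) ω) b))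
  have hH : ∀ b, StronglyMeasurable[ℱ t] (H b) := fun b =>
    (measurable_exp.comp (((h.measurable_LLR3 t).add
      ((measurable_of_countable fun k => llrBern q k b).comp ha)).const_mul s)).stronglyMeasurable
  have hHC : ∀ b : Fin 2, ∀ ω, |H b ω| ≤ exp (|s| * (t * B + B)) := fun b ω => by
    rw [abs_of_pos (exp_pos _)]
    exact exp_mul_le_exp_abs_mul ((abs_add_le _ _).trans
      (add_le_add (h.abs_LLR3_le hB t ω) (hB _ b)))
  let φ (k : Fin 3) : ℝ :=
    q i k * exp (s * llrBern q k 1) + (1 - q i k) * exp (s * llrBern q k 0)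
  have hE : Integrable (fun ω => exp (s * LLR3 q a y t ω) * φ (a (t + 1) ω)) μ := by
    obtain ⟨C, hC⟩ := Finite.exists_le fun k => ‖φ k‖
    exact (h.integrable_exp_mul_LLR3 s t).mul_bdd
      (((measurable_of_countable φ).comp ha).mono (ℱ.le t) le_rfl).aestronglyMeasurable
      (.of_forall fun ω => hC (a (t + 1) ω))
  calc mgf (LLR3 q a y (t + 1)) μ s
      = ∫ ω, {ω | y (t + 1) ω = 1}.piecewise (H 1) (H 0) ω ∂μ := by
        rw [mgf, h.exp_mul_LLR3_succ_eq_piecewise]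
    _ = ∫ ω, exp (s * LLR3 q a y t ω) * φ (a (t + 1) ω) ∂μ := by
        rw [integral_piecewise_eq_of_condExp_indicator (ℱ.le t) (A := {ω | y (t + 1) ω = 1})
          (ℱ.le _ _ (h.meas_y (t + 1) ht (measurableSet_singleton 1))) hr (hH 1) (hH 0)
          (hHC 1) (hHC 0)]
        congr 1 with ω
        simp only [H, φ, mul_add, exp_add]
        ring
    _ ≤ ∫ ω, exp (s * LLR3 q a y t ω) * c ∂μ :=
        integral_mono hE ((h.integrable_exp_mul_LLR3 s t).mul_const c) fun ω =>
          mul_le_mul_of_nonneg_left (hc _) (exp_pos _).le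
    _ = c * mgf (LLR3 q a y t) μ s := by rw [integral_mul_const, mgf, mul_comm]

lemma mgf_LLR3_le_pow [IsZeroOrProbabilityMeasure μ] (h : IsPricingProcess3 μ ℱ q i a y)
    {s c : ℝ} (hc0 : 0 ≤ c)
    (hc : ∀ k, q i k * exp (s * llrBern q k 1) + (1 - q i k) * exp (s * llrBern q k 0) ≤ c)
    (t : ℕ) : mgf (LLR3 q a y t) μ s ≤ c ^ t := by
  induction t with
  | zero => simp [mgf, LLR3]
  | succ t ih =>
    calc mgf (LLR3 q a y (t + 1)) μ s ≤ c * mgf (LLR3 q a y t) μ s := h.mgf_LLR3_succ_le hc t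
      _ ≤ c * c ^ t := by gcongr
      _ = c ^ (t + 1) := (pow_succ' c t).symm

lemma measure_LLR3_div_lt_le [IsZeroOrProbabilityMeasure μ]
    (h : IsPricingProcess3 μ ℱ q i a y) {l c η : ℝ} (hl : 0 ≤ l) (hc0 : 0 ≤ c)
    (hc : ∀ k, q i k * exp (-l * llrBern q k 1) + (1 - q i k) * exp (-l * llrBern q k 0) ≤ c)
    {t : ℕ} (ht : 0 < t) :
    μ {ω | LLR3 q a y t ω / t < η} ≤ ENNReal.ofReal (exp (l * η * t) * c ^ t) :=
  calc μ {ω | LLR3 q a y t ω / t < η}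
      ≤ μ {ω | LLR3 q a y t ω ≤ η * t} :=
        measure_mono fun ω (hω : LLR3 q a y t ω / t < η) =>
          ((div_lt_iff₀ (Nat.cast_pos.2 ht)).1 hω).le
    _ = ENNReal.ofReal (μ.real {ω | LLR3 q a y t ω ≤ η * t}) :=
        (ENNReal.ofReal_toReal (measure_ne_top μ _)).symm
    _ ≤ ENNReal.ofReal (exp (l * η * t) * c ^ t) := by
        refine ENNReal.ofReal_le_ofReal ((measure_le_le_exp_mul_mgf _ (neg_nonpos.2 hl)
          (h.integrable_exp_mul_LLR3 _ t)).trans ?_)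
        rw [neg_neg, mul_assoc]
        gcongr
        exact h.mgf_LLR3_le_pow hc0 hc t

end IsPricingProcess3

theorem xlrt_error_probability_exponential_decay_general
    (μ : Measure Ω) [IsProbabilityMeasure μ] (ℱ : Filtration ℕ mΩ)
    (q : Fin 2 → Fin 3 → ℝ)
    (hq : ∀ i k, q i k ∈ Set.Ioo (0 : ℝ) 1)
    (a : ℕ → Ω → Fin 3) (y : ℕ → Ω → ℕ)
    (η₁ : ℝ)
    (hη₁ : η₁ < Finset.univ.inf' ⟨0, Finset.mem_univ 0⟩
      (fun k : Fin 3 => klBern (q 1 k) (q 0 k)))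
    (hproc : IsPricingProcess3 μ ℱ q 1 a y)
    (aa m M : ℝ)
    (haa : aa = Finset.univ.inf' ⟨0, Finset.mem_univ 0⟩
        (fun k : Fin 3 => klBern (q 1 k) (q 0 k)) - η₁)
    (hm : m = Finset.univ.inf' ⟨(0, 0), Finset.mem_univ _⟩
      (fun p : Fin 3 × Fin 2 =>
        Real.log (bern (q 1 p.1) (p.2 : ℕ) / bern (q 0 p.1) (p.2 : ℕ))))
    (hM : M = Finset.univ.sup' ⟨(0, 0), Finset.mem_univ _⟩
      (fun p : Fin 3 × Fin 2 =>
        Real.log (bern (q 1 p.1) (p.2 : ℕ) / bern (q 0 p.1) (p.2 : ℕ)))) :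
    0 < aa ∧
      ∀ t : ℕ, 1 ≤ t →
        μ {ω | LLR3 q a y t ω / t < η₁}
          ≤ ENNReal.ofReal (Real.exp (-2 * aa ^ 2 * t / (M - m) ^ 2)) := by
  refine ⟨by linarith, fun t ht => ?_⟩
  have hbounds : ∀ k (b : Fin 2), llrBern q k b ∈ Set.Icc m M := fun k b =>
    ⟨hm ▸ Finset.inf'_le (fun p : Fin 3 × Fin 2 => llrBern q p.1 p.2) (Finset.mem_univ (k, b)),
      hM ▸ Finset.le_sup' (fun p : Fin 3 × Fin 2 => llrBern q p.1 p.2) (Finset.mem_univ (k, b))⟩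
  set l := 4 * aa / (M - m) ^ 2
  have hl : 0 ≤ l := div_nonneg (by linarith) (sq_nonneg _)
  have hc : ∀ k, q 1 k * exp (-l * llrBern q k 1) + (1 - q 1 k) * exp (-l * llrBern q k 0)
      ≤ exp (l ^ 2 * (M - m) ^ 2 / 8 - l * (aa + η₁)) := fun k =>
    two_point_exp_neg_mul_le (hq 1 k).1.le (hq 1 k).2.le (hbounds k 1) (hbounds k 0) hl <| by
      rw [← klBern_eq_llrBern, haa, sub_add_cancel]
      exact Finset.inf'_le _ (Finset.mem_univ k)
  refine (hproc.measure_LLR3_div_lt_le hl (exp_pos _).le hc ht).trans_eq ?_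
  rw [← exp_nat_mul, ← exp_add]
  congr 2
  -- if `M = m` then `l = 0` (division by zero) and both exponents vanish
  rcases eq_or_ne (M - m) 0 with hMm | hMm
  · simp [l, hMm]
  · simp only [l]
    field_simp
    ring

/-- **Exponential decay of the error probability under XLRT.** Suppose the true demand model
is `i = 1` and the pricing process follows the XLRT policy with thresholds `η₀, η₁`. With
`a = min_k I(q 1 k ‖ q 0 k) − η₁ > 0`, for every `t ≥ 1`,
`P(L_t / t < η₁) ≤ exp(−2 a² t / (M − m)²)`. -/
theorem xlrt_error_probability_exponential_decay
    (μ : Measure Ω) [IsProbabilityMeasure μ] (ℱ : Filtration ℕ mΩ)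
    (q : Fin 2 → Fin 3 → ℝ)
    (hq : ∀ i k, q i k ∈ Set.Ioo (0 : ℝ) 1)
    (hni : ∀ k, q 0 k ≠ q 1 k)
    (a : ℕ → Ω → Fin 3) (y : ℕ → Ω → ℕ)
    (η₀ η₁ : ℝ) (hη₀0 : 0 ≤ η₀) (hη₁0 : 0 ≤ η₁)
    (hη₁ : η₁ < Finset.univ.inf' ⟨0, Finset.mem_univ 0⟩
      (fun k : Fin 3 => klBern (q 1 k) (q 0 k)))
    (hη₀ : η₀ < Finset.univ.inf' ⟨0, Finset.mem_univ 0⟩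
      (fun k : Fin 3 => klBern (q 0 k) (q 1 k)))
    (hproc : IsPricingProcess3 μ ℱ q 1 a y)
    (hpol : IsXLRT q a y η₀ η₁)
    (aa m M : ℝ)
    (haa : aa = Finset.univ.inf' ⟨0, Finset.mem_univ 0⟩
        (fun k : Fin 3 => klBern (q 1 k) (q 0 k)) - η₁)
    (hm : m = Finset.univ.inf' ⟨(0, 0), Finset.mem_univ _⟩
      (fun p : Fin 3 × Fin 2 =>
        Real.log (bern (q 1 p.1) (p.2 : ℕ) / bern (q 0 p.1) (p.2 : ℕ))))
    (hM : M = Finset.univ.sup' ⟨(0, 0), Finset.mem_univ _⟩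
      (fun p : Fin 3 × Fin 2 =>
        Real.log (bern (q 1 p.1) (p.2 : ℕ) / bern (q 0 p.1) (p.2 : ℕ)))) :
    0 < aa ∧
      ∀ t : ℕ, 1 ≤ t →
        μ {ω | LLR3 q a y t ω / t < η₁}
          ≤ ENNReal.ofReal (Real.exp (-2 * aa ^ 2 * t / (M - m) ^ 2)) :=
  xlrt_error_probability_exponential_decay_general μ ℱ q hq a y η₁ hη₁ hproc aa m M haa hm hM
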